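/- arXiv:2404.14439 — 3 statements merged into one kernel-verified Lean document; each statement's English description precedes it below -/
import Mathlib

section
/- The type B Stirling numbers of the second kind, defined by the recurrence S_B(n,k) = S_B(n-1,k-1) + (2k+1)·S_B(n-1,k) with S_B(0,k) = δ_{0,k}, count the number of type B set partitions of ⟨n⟩ = {-n,...,-1,0,1,...,n} into 2k+1 blocks in standard form. -/
/-!
Remove `±(n + 1)` from a standard partition `T` of `⟨n + 1⟩` with `2k + 1` blocks. Since `n + 1`
has the largest absolute value, the block minima `m_j` do not change, unless a block empties.
Only the last pair can empty, exactly when it is `{-(n + 1)}, {n + 1}`; deleting that pair leaves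
a standard partition of `⟨n⟩` with `2k - 1` blocks. Otherwise what remains is a standard
partition of `⟨n⟩` with `2k + 1` blocks, and `T` is recovered from it together with the block
that contained `n + 1` (its partner contained `-(n + 1)`), one of `2k + 1` choices. This is the
recurrence `S_B(n + 1, k) = S_B(n, k - 1) + (2k + 1) S_B(n, k)`.
-/

open Finset Polynomial

/-- The ground set ⟨n⟩ = {-n, ..., -1, 0, 1, ..., n}. -/
noncomputable def angleB (n : ℕ) : Finset ℤ := Finset.Icc (-(n : ℤ)) (n : ℤ)

/-- An ordered type B (signed) partition of ⟨n⟩ with 2k+1 blocks: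
pairwise disjoint nonempty blocks covering ⟨n⟩, with 0 ∈ S₀, S₀ closed under
negation, and S_{2i} = -S_{2i-1} for i ≥ 1. -/
def IsOrderedB (n k : ℕ) (S : Fin (2*k+1) → Finset ℤ) : Prop :=
  (∀ i, (S i).Nonempty) ∧
  (∀ i j, i ≠ j → Disjoint (S i) (S j)) ∧
  (Finset.univ.biUnion S = angleB n) ∧
  ((0 : ℤ) ∈ S 0) ∧
  (∀ x ∈ S 0, -x ∈ S 0) ∧
  (∀ i : ℕ, 1 ≤ i → ∀ h : 2*i < 2*k+1,
    S ⟨2*i, h⟩ = (S ⟨2*i-1, by omega⟩).image (fun x => -x))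

/-- m_j = min |S_j| (0 if the block is empty). -/
def mB {m : ℕ} (S : Fin m → Finset ℤ) (j : Fin m) : ℤ :=
  WithTop.untopD 0 (((S j).image (fun x => |x|)).min)

/-- M_j = max |S_j| (0 if the block is empty). -/
def MB {m : ℕ} (S : Fin m → Finset ℤ) (j : Fin m) : ℤ :=
  WithBot.unbotD 0 (((S j).image (fun x => |x|)).max)

/-- A standard type B partition: ordered, with m_{2i} ∈ S_{2i} for i ≥ 1 and
0 = m₀ < m₂ < m₄ < ... < m_{2k}. -/
def IsStandardB (n k : ℕ) (S : Fin (2*k+1) → Finset ℤ) : Prop :=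
  IsOrderedB n k S ∧
  (∀ i : ℕ, 1 ≤ i → ∀ h : 2*i < 2*k+1, mB S ⟨2*i, h⟩ ∈ S ⟨2*i, h⟩) ∧
  (∀ i : ℕ, ∀ h : 2*(i+1) < 2*k+1, mB S ⟨2*i, by omega⟩ < mB S ⟨2*(i+1), h⟩)

/-- inv ρ: number of pairs (s, S_j) with s ∈ S_i for some i < j and s ≥ m_j. -/
noncomputable def invB {m : ℕ} (S : Fin m → Finset ℤ) : ℕ :=
  {p : ℤ × Fin m | (∃ i < p.2, p.1 ∈ S i) ∧ mB S p.2 ≤ p.1}.ncard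

/-- ros_B = inv. -/
noncomputable def rosB {m : ℕ} (S : Fin m → Finset ℤ) : ℕ := invB S

/-- los_{B'}: pairs (s, S_j) with s ∈ S_i for some i > j and s ≥ m_j. -/
noncomputable def losB' {m : ℕ} (S : Fin m → Finset ℤ) : ℕ :=
  {p : ℤ × Fin m | (∃ i, p.2 < i ∧ p.1 ∈ S i) ∧ mB S p.2 ≤ p.1}.ncard

/-- lob_{B'}: pairs (s, S_j) with s ∈ S_i for some i > j and 0 < s ≤ m_j. -/
noncomputable def lobB' {m : ℕ} (S : Fin m → Finset ℤ) : ℕ :=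
  {p : ℤ × Fin m | (∃ i, p.2 < i ∧ p.1 ∈ S i) ∧ 0 < p.1 ∧ p.1 ≤ mB S p.2}.ncard

/-- rcb_B: pairs (s, S_j) with s ∈ S_i for some i < j and 0 < s ≤ M_j. -/
noncomputable def rcbB {m : ℕ} (S : Fin m → Finset ℤ) : ℕ :=
  {p : ℤ × Fin m | (∃ i < p.2, p.1 ∈ S i) ∧ 0 < p.1 ∧ p.1 ≤ MB S p.2}.ncard

/-- rob_B: pairs (s, S_j) with s ∈ S_i for some i < j and 0 < s ≤ m_j. -/
noncomputable def robB {m : ℕ} (S : Fin m → Finset ℤ) : ℕ :=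
  {p : ℤ × Fin m | (∃ i < p.2, p.1 ∈ S i) ∧ 0 < p.1 ∧ p.1 ≤ mB S p.2}.ncard

/-- rcs_B: pairs (s, S_j) with s ∈ S_i for some i < j and s ≥ M_j. -/
noncomputable def rcsB {m : ℕ} (S : Fin m → Finset ℤ) : ℕ :=
  {p : ℤ × Fin m | (∃ i < p.2, p.1 ∈ S i) ∧ MB S p.2 ≤ p.1}.ncard

/-- Type B Stirling numbers of the second kind. -/
def StirB : ℕ → ℕ → ℕ
  | 0, 0 => 1
  | 0, _+1 => 0
  | n+1, 0 => StirB n 0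
  | n+1, k+1 => StirB n k + (2*(k+1)+1) * StirB n (k+1)

/-- [m] = 1 + q + ... + q^{m-1}. -/
noncomputable def qb (m : ℕ) : Polynomial ℤ := ∑ i ∈ Finset.range m, (Polynomial.X : Polynomial ℤ) ^ i

/-- Type B q-Stirling numbers of the second kind. -/
noncomputable def qStirB : ℕ → ℕ → Polynomial ℤ
  | 0, 0 => 1
  | 0, _+1 => 0
  | n+1, 0 => qStirB n 0
  | n+1, k+1 => qStirB n k + qb (2*(k+1)+1) * qStirB n (k+1)

/-- [2k]!! = [2k][2k-2]⋯[2]. -/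
noncomputable def qdf : ℕ → Polynomial ℤ
  | 0 => 1
  | k+1 => qb (2*(k+1)) * qdf k

/-- The complement map on ⟨n⟩: i ↦ n+1-i for i > 0, -i ↦ -(n+1-i), 0 ↦ 0. -/
def complB (n : ℕ) (x : ℤ) : ℤ :=
  if 0 < x then (n : ℤ) + 1 - x else if x < 0 then -((n : ℤ) + 1) - x else 0

/-- Complement of a partition, blockwise. -/
def complP (n : ℕ) {m : ℕ} (S : Fin m → Finset ℤ) : Fin m → Finset ℤ :=
  fun j => (S j).image (complB n)

/-- The index of the block paired with block i: 0 ↦ 0, 2ℓ-1 ↦ 2ℓ, 2ℓ ↦ 2ℓ-1. -/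
def pairIdx (k : ℕ) (i : Fin (2*k+1)) : Fin (2*k+1) :=
  if i.val = 0 then i
  else if h2 : i.val % 2 = 1 then ⟨i.val + 1, by omega⟩ else ⟨i.val - 1, by omega⟩


lemma mem_angleB {n : ℕ} {x : ℤ} : x ∈ angleB n ↔ |x| ≤ n := by
  simp [angleB, abs_le, and_comm]

lemma neg_mem_angleB {n : ℕ} {x : ℤ} : -x ∈ angleB n ↔ x ∈ angleB n := by
  simp [mem_angleB]

lemma mem_angleB_succ {n : ℕ} {x : ℤ} :
    x ∈ angleB (n + 1) ↔ x ∈ angleB n ∨ x = (n : ℤ) + 1 ∨ x = -((n : ℤ) + 1) := by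
  simp only [mem_angleB, abs_le]
  omega

lemma natCast_add_one_notMem_angleB (n : ℕ) : (n : ℤ) + 1 ∉ angleB n := by
  simp [mem_angleB, abs_le]

lemma neg_natCast_add_one_notMem_angleB (n : ℕ) : -((n : ℤ) + 1) ∉ angleB n := by
  rw [neg_mem_angleB]
  exact natCast_add_one_notMem_angleB n

def absMin (A : Finset ℤ) : ℤ := WithTop.untopD 0 ((A.image fun x => |x|).min)

lemma mB_eq_absMin {m : ℕ} (S : Fin m → Finset ℤ) (j : Fin m) : mB S j = absMin (S j) := rfl

lemma exists_abs_eq_absMin {A : Finset ℤ} (hA : A.Nonempty) : ∃ a ∈ A, |a| = absMin A := by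
  obtain ⟨b, hb⟩ := Finset.min_of_nonempty (hA.image fun x => |x|)
  obtain ⟨a, ha, rfl⟩ := Finset.mem_image.1 (Finset.mem_of_min hb)
  exact ⟨a, ha, by simp [absMin, hb]⟩

lemma absMin_le_abs {A : Finset ℤ} {a : ℤ} (ha : a ∈ A) : absMin A ≤ |a| := by
  obtain ⟨b, hb⟩ := Finset.min_of_nonempty (Finset.Nonempty.image ⟨a, ha⟩ fun x => |x|)
  have := Finset.min_le (Finset.mem_image_of_mem (fun x => |x|) ha)
  rw [hb, WithTop.coe_le_coe] at this
  simpa [absMin, hb] using this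

lemma absMin_nonneg (A : Finset ℤ) : 0 ≤ absMin A := by
  rcases A.eq_empty_or_nonempty with rfl | hA
  · simp [absMin]
  · obtain ⟨a, -, ha⟩ := exists_abs_eq_absMin hA
    exact ha ▸ abs_nonneg a

lemma absMin_singleton (x : ℤ) : absMin {x} = |x| := by
  simp [absMin]

lemma absMin_union_of_abs_le {A B : Finset ℤ} (hA : A.Nonempty)
    (h : ∀ a ∈ A, ∀ b ∈ B, |a| ≤ |b|) : absMin (A ∪ B) = absMin A := by
  obtain ⟨a, ha, hmin⟩ := exists_abs_eq_absMin hA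
  refine le_antisymm (hmin ▸ absMin_le_abs (Finset.mem_union_left B ha)) ?_
  obtain ⟨c, hc, hc'⟩ := exists_abs_eq_absMin (hA.mono Finset.subset_union_left)
  rw [← hc']
  rcases Finset.mem_union.1 hc with hc | hc
  · exact absMin_le_abs hc
  · rw [← hmin]
    exact h a ha c hc

section pairIdx

variable {k : ℕ}

lemma pairIdx_val (j : Fin (2*k+1)) :
    (pairIdx k j).val =
      if j.val = 0 then 0 else if j.val % 2 = 1 then j.val + 1 else j.val - 1 := by
  grind [pairIdx]

lemma pairIdx_involutive : Function.Involutive (pairIdx k) := by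
  intro j
  ext
  simp only [pairIdx_val]
  grind

lemma pairIdx_zero : pairIdx k 0 = 0 := rfl

lemma pairIdx_even {ℓ : ℕ} (hℓ : 1 ≤ ℓ) (h : 2*ℓ < 2*k+1) :
    pairIdx k ⟨2*ℓ, h⟩ = ⟨2*ℓ-1, by omega⟩ := by
  ext
  rw [pairIdx_val]
  split_ifs <;> simp_all

lemma pairIdx_ne_self {j : Fin (2*k+1)} (hj : j ≠ 0) : pairIdx k j ≠ j := by
  intro h
  have h' := congrArg Fin.val h
  rw [pairIdx_val] at h'
  grind

lemma pairIdx_castLE (j : Fin (2*k+1)) :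
    pairIdx (k+1) (Fin.castLE (by omega) j) = Fin.castLE (by omega) (pairIdx k j) := by
  ext
  simp only [pairIdx_val, Fin.val_castLE]

lemma pairIdx_last : pairIdx (k+1) (Fin.last (2*(k+1))) = ⟨2*k+1, by omega⟩ := by
  ext
  rw [pairIdx_val]
  grind

lemma pairIdx_odd_last : pairIdx (k+1) ⟨2*k+1, by omega⟩ = Fin.last (2*(k+1)) := by
  rw [← pairIdx_last, pairIdx_involutive]

lemma eq_zero_or_exists_even (j : Fin (2*k+1)) :
    j = 0 ∨ ∃ ℓ, 1 ≤ ℓ ∧ ∃ h : 2*ℓ < 2*k+1, j = ⟨2*ℓ, h⟩ ∨ pairIdx k j = ⟨2*ℓ, h⟩ := by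
  rcases Nat.even_or_odd' j.val with ⟨ℓ, hℓ | hℓ⟩
  · rcases Nat.eq_zero_or_pos ℓ with rfl | hpos
    · exact Or.inl (Fin.ext hℓ)
    · exact Or.inr ⟨ℓ, hpos, hℓ ▸ j.isLt, Or.inl (Fin.ext hℓ)⟩
  · refine Or.inr ⟨ℓ + 1, by omega, by omega, Or.inr (Fin.ext ?_)⟩
    rw [pairIdx_val]
    grind

end pairIdx

/-- `IsOrderedB` restated elementwise; negation symmetry becomes `S (pairIdx k j) = -S j` for
every block, the middle block included. -/
structure IsSignedPartition (n k : ℕ) (S : Fin (2*k+1) → Finset ℤ) : Prop where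
  nonempty : ∀ j, (S j).Nonempty
  mem_angleB_iff : ∀ x, x ∈ angleB n ↔ ∃ j, x ∈ S j
  eq_of_mem : ∀ {i j x}, x ∈ S i → x ∈ S j → i = j
  zero_mem : 0 ∈ S 0
  mem_pairIdx_iff : ∀ j x, x ∈ S (pairIdx k j) ↔ -x ∈ S j

lemma mem_neg_image {A : Finset ℤ} {x : ℤ} : x ∈ A.image (fun t => -t) ↔ -x ∈ A := by
  simp [neg_eq_iff_eq_neg]

theorem isOrderedB_iff {n k : ℕ} {S : Fin (2*k+1) → Finset ℤ} :
    IsOrderedB n k S ↔ IsSignedPartition n k S := by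
  constructor
  · rintro ⟨hne, hdisj, hcover, h0, hneg, hpair⟩
    refine ⟨hne, fun x => by simp [← hcover], fun hi hj => ?_, h0, fun j x => ?_⟩
    · by_contra h
      exact Finset.disjoint_left.1 (hdisj _ _ h) hi hj
    obtain rfl | ⟨ℓ, hℓ, h, rfl | hj⟩ := eq_zero_or_exists_even j
    · rw [pairIdx_zero]
      exact ⟨hneg x, fun hx => by simpa using hneg _ hx⟩
    · rw [pairIdx_even hℓ h, hpair ℓ hℓ h, mem_neg_image, neg_neg]
    · rw [hj, ← pairIdx_involutive j, hj, pairIdx_even hℓ h, hpair ℓ hℓ h, mem_neg_image]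
  · intro hS
    refine ⟨hS.nonempty, fun i j hij => Finset.disjoint_left.2 fun x hi hj =>
      hij (hS.eq_of_mem hi hj), ?_, hS.zero_mem, fun x hx => ?_, fun ℓ hℓ h => ?_⟩
    · ext x
      simp [hS.mem_angleB_iff]
    · rw [← hS.mem_pairIdx_iff, pairIdx_zero]
      simpa using hx
    · ext x
      rw [mem_neg_image, ← hS.mem_pairIdx_iff, ← pairIdx_even hℓ h, pairIdx_involutive]

namespace IsSignedPartition

variable {n k : ℕ} {S : Fin (2*k+1) → Finset ℤ}

lemma mem_angleB_of_mem (hS : IsSignedPartition n k S) {j : Fin (2*k+1)} {x : ℤ}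
    (hx : x ∈ S j) : x ∈ angleB n :=
  (hS.mem_angleB_iff x).2 ⟨j, hx⟩

lemma mB_le (hS : IsSignedPartition n k S) (j : Fin (2*k+1)) : mB S j ≤ n := by
  obtain ⟨a, ha, hmin⟩ := exists_abs_eq_absMin (hS.nonempty j)
  rw [mB_eq_absMin, ← hmin, ← mem_angleB]
  exact hS.mem_angleB_of_mem ha

lemma eq_singleton_of_mB_eq (hS : IsSignedPartition n k S) {j : Fin (2*k+1)} (hj : j ≠ 0)
    (hmem : mB S j ∈ S j) (hmB : mB S j = n) : S j = {(n : ℤ)} := by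
  rw [hmB] at hmem
  refine Finset.eq_singleton_iff_unique_mem.2 ⟨hmem, fun x hx => ?_⟩
  have hle : (n : ℤ) ≤ |x| := hmB ▸ absMin_le_abs hx
  have hge : |x| ≤ n := mem_angleB.1 (hS.mem_angleB_of_mem hx)
  rcases abs_cases x with ⟨hx', -⟩ | ⟨hx', -⟩
  · omega
  -- `x = -n` would put `n` into the partner block as well
  · have : (n : ℤ) ∈ S (pairIdx k j) := by
      rw [hS.mem_pairIdx_iff]
      convert hx using 1
      omega
    exact absurd (hS.eq_of_mem this hmem) (pairIdx_ne_self hj)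

lemma eq_zero_of_angleB_zero (hS : IsSignedPartition 0 k S) : k = 0 := by
  by_contra hk
  obtain ⟨x, hx⟩ := hS.nonempty ⟨1, by omega⟩
  have hx0 : x = 0 := by simpa [mem_angleB] using hS.mem_angleB_of_mem hx
  have := hS.eq_of_mem hx (hx0 ▸ hS.zero_mem)
  simp [Fin.ext_iff] at this

end IsSignedPartition

def insertTop (n : ℕ) {k : ℕ} (S : Fin (2*k+1) → Finset ℤ) (i : Fin (2*k+1)) :
    Fin (2*k+1) → Finset ℤ :=
  fun j => S j ∪ ((if j = i then {(n : ℤ) + 1} else ∅) ∪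
    (if j = pairIdx k i then {-((n : ℤ) + 1)} else ∅))

noncomputable def eraseTop (n : ℕ) {m : ℕ} (T : Fin m → Finset ℤ) : Fin m → Finset ℤ :=
  fun j => T j ∩ angleB n

section insertTop

variable {n k : ℕ} {S T : Fin (2*k+1) → Finset ℤ} {i : Fin (2*k+1)} {x : ℤ}

lemma mem_insertTop {j : Fin (2*k+1)} : x ∈ insertTop n S i j ↔
    x ∈ S j ∨ (j = i ∧ x = (n : ℤ) + 1) ∨ (j = pairIdx k i ∧ x = -((n : ℤ) + 1)) := by
  simp only [insertTop, Finset.mem_union]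
  split_ifs <;> simp_all

lemma mem_eraseTop {m : ℕ} {T : Fin m → Finset ℤ} {j : Fin m} :
    x ∈ eraseTop n T j ↔ x ∈ T j ∧ x ∈ angleB n :=
  Finset.mem_inter

lemma IsSignedPartition.insertTop (hS : IsSignedPartition n k S) (i : Fin (2*k+1)) :
    IsSignedPartition (n+1) k (insertTop n S i) where
  nonempty j := (hS.nonempty j).mono Finset.subset_union_left
  mem_angleB_iff x := by
    simp only [mem_angleB_succ, mem_insertTop, exists_or, hS.mem_angleB_iff, exists_and_right,
      exists_eq, true_and]
  eq_of_mem {a b x} ha hb := by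
    rw [mem_insertTop] at ha hb
    by_cases hx : x ∈ angleB n
    · have hc : x ≠ (n : ℤ) + 1 ∧ x ≠ -((n : ℤ) + 1) :=
        ⟨fun h => natCast_add_one_notMem_angleB n (h ▸ hx),
          fun h => neg_natCast_add_one_notMem_angleB n (h ▸ hx)⟩
      simp only [hc, and_false, or_false] at ha hb
      exact hS.eq_of_mem ha hb
    · rcases ha.resolve_left (mt hS.mem_angleB_of_mem hx) with ⟨rfl, rfl⟩ | ⟨rfl, rfl⟩ <;>
        rcases hb.resolve_left (mt hS.mem_angleB_of_mem hx) with ⟨rfl, h⟩ | ⟨rfl, h⟩ <;>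
        first | rfl | omega
  zero_mem := mem_insertTop.2 (Or.inl hS.zero_mem)
  mem_pairIdx_iff j x := by
    simp only [mem_insertTop, hS.mem_pairIdx_iff, pairIdx_involutive.eq_iff, pairIdx_involutive i,
      neg_eq_iff_eq_neg, neg_neg]
    tauto

lemma mB_insertTop (hS : IsSignedPartition n k S) (i j : Fin (2*k+1)) :
    mB (insertTop n S i) j = mB S j := by
  refine absMin_union_of_abs_le (hS.nonempty j) fun a ha b hb => ?_
  have ha' := mem_angleB.1 (hS.mem_angleB_of_mem ha)
  have hb' : b = (n : ℤ) + 1 ∨ b = -((n : ℤ) + 1) := by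
    simp only [Finset.mem_union] at hb
    split_ifs at hb <;> simp_all
  rcases hb' with rfl | rfl <;>
    simp only [abs_neg, abs_of_nonneg (by positivity : (0 : ℤ) ≤ n + 1)] <;> omega

lemma insertTop_ne_singleton (hS : IsSignedPartition n k S) (i j : Fin (2*k+1)) :
    insertTop n S i j ≠ {(n : ℤ) + 1} := by
  intro h
  obtain ⟨x, hx⟩ := hS.nonempty j
  have hx' : x ∈ insertTop n S i j := mem_insertTop.2 (Or.inl hx)
  rw [h, Finset.mem_singleton] at hx'
  exact natCast_add_one_notMem_angleB n (hx' ▸ hS.mem_angleB_of_mem hx)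

lemma eraseTop_insertTop (hS : IsSignedPartition n k S) (i : Fin (2*k+1)) :
    eraseTop n (insertTop n S i) = S := by
  ext j x
  rw [mem_eraseTop, mem_insertTop]
  refine ⟨fun ⟨hx, hxn⟩ => ?_, fun hx => ⟨Or.inl hx, hS.mem_angleB_of_mem hx⟩⟩
  rcases hx with hx | ⟨-, rfl⟩ | ⟨-, rfl⟩
  · exact hx
  · exact absurd hxn (natCast_add_one_notMem_angleB n)
  · exact absurd hxn (neg_natCast_add_one_notMem_angleB n)

lemma insertTop_eraseTop (hT : IsSignedPartition (n+1) k T) (hi : (n : ℤ) + 1 ∈ T i) :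
    insertTop n (eraseTop n T) i = T := by
  have hi' : -((n : ℤ) + 1) ∈ T (pairIdx k i) := by rwa [hT.mem_pairIdx_iff, neg_neg]
  ext j x
  rw [mem_insertTop, mem_eraseTop]
  constructor
  · rintro (⟨hx, -⟩ | ⟨rfl, rfl⟩ | ⟨rfl, rfl⟩) <;> assumption
  · intro hx
    rcases mem_angleB_succ.1 (hT.mem_angleB_of_mem hx) with hxn | rfl | rfl
    · exact Or.inl ⟨hx, hxn⟩
    · exact Or.inr (Or.inl ⟨hT.eq_of_mem hx hi, rfl⟩)
    · exact Or.inr (Or.inr ⟨hT.eq_of_mem hx hi', rfl⟩)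

lemma IsSignedPartition.eraseTop (hT : IsSignedPartition (n+1) k T)
    (hne : ∀ j, (eraseTop n T j).Nonempty) : IsSignedPartition n k (eraseTop n T) where
  nonempty := hne
  mem_angleB_iff x := by
    simp only [mem_eraseTop, exists_and_right, ← hT.mem_angleB_iff, mem_angleB_succ]
    tauto
  eq_of_mem hi hj := hT.eq_of_mem (mem_eraseTop.1 hi).1 (mem_eraseTop.1 hj).1
  zero_mem := mem_eraseTop.2 ⟨hT.zero_mem, mem_angleB.2 (by simp)⟩
  mem_pairIdx_iff j x := by
    rw [mem_eraseTop, mem_eraseTop, hT.mem_pairIdx_iff, neg_mem_angleB]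

lemma mB_eraseTop {m : ℕ} {T : Fin m → Finset ℤ} {j : Fin m}
    (hne : (eraseTop n T j).Nonempty) : mB (eraseTop n T) j = mB T j := by
  rw [mB_eq_absMin, mB_eq_absMin, ← sup_inf_sdiff (T j) (angleB n)]
  refine (absMin_union_of_abs_le hne fun a ha b hb => ?_).symm
  have ha' := mem_angleB.1 (Finset.mem_inter.1 ha).2
  have hb' := mem_angleB.not.1 (Finset.mem_sdiff.1 hb).2
  omega

end insertTop

namespace IsStandardB

variable {n k : ℕ} {S T : Fin (2*k+1) → Finset ℤ}

lemma isSignedPartition (hS : IsStandardB n k S) : IsSignedPartition n k S :=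
  isOrderedB_iff.1 hS.1

lemma insertTop (hS : IsStandardB n k S) (i : Fin (2*k+1)) :
    IsStandardB (n+1) k (insertTop n S i) := by
  obtain ⟨hord, hmem, hlt⟩ := hS
  have hS' := isOrderedB_iff.1 hord
  refine ⟨isOrderedB_iff.2 (hS'.insertTop i), fun ℓ hℓ h => ?_, fun ℓ h => ?_⟩
  · rw [mB_insertTop hS']
    exact mem_insertTop.2 (Or.inl (hmem ℓ hℓ h))
  · rw [mB_insertTop hS', mB_insertTop hS']
    exact hlt ℓ h

/-- Otherwise the block `⟨2*ℓ, h⟩` would be `{n + 1}`: it is not the last block, and the next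
even block would have least absolute value above `n + 1`. -/
lemma mB_le_of_last_ne (hT : IsStandardB (n+1) k T)
    (hlast : T (Fin.last (2*k)) ≠ {(n : ℤ) + 1}) {ℓ : ℕ} (hℓ : 1 ≤ ℓ) (h : 2*ℓ < 2*k+1) :
    mB T ⟨2*ℓ, h⟩ ≤ n := by
  obtain ⟨hord, hmem, hlt⟩ := hT
  have hT' := isOrderedB_iff.1 hord
  have hle (j) : mB T j ≤ (n : ℤ) + 1 := by exact_mod_cast hT'.mB_le j
  by_contra hgt
  have hsingle : T ⟨2*ℓ, h⟩ = {(n : ℤ) + 1} := by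
    have := hT'.eq_singleton_of_mB_eq (fun h0 => by simp [Fin.ext_iff] at h0; omega)
      (hmem ℓ hℓ h) (by have := hle ⟨2*ℓ, h⟩; push_cast; omega)
    exact_mod_cast this
  rcases (show ℓ = k ∨ ℓ < k by omega) with rfl | hℓk
  · exact hlast hsingle
  · have hnext := hlt ℓ (by omega)
    rw [mB_eq_absMin T ⟨2*ℓ, _⟩, hsingle, absMin_singleton, abs_of_nonneg (by positivity)]
      at hnext
    have := hle ⟨2*(ℓ+1), by omega⟩
    omega

lemma mB_mem_eraseTop (hT : IsStandardB (n+1) k T)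
    (hlast : T (Fin.last (2*k)) ≠ {(n : ℤ) + 1}) {ℓ : ℕ} (hℓ : 1 ≤ ℓ) (h : 2*ℓ < 2*k+1) :
    mB T ⟨2*ℓ, h⟩ ∈ eraseTop n T ⟨2*ℓ, h⟩ := by
  refine mem_eraseTop.2 ⟨hT.2.1 ℓ hℓ h, mem_angleB.2 ?_⟩
  rw [mB_eq_absMin, abs_of_nonneg (absMin_nonneg _)]
  exact hT.mB_le_of_last_ne hlast hℓ h

lemma eraseTop_nonempty (hT : IsStandardB (n+1) k T)
    (hlast : T (Fin.last (2*k)) ≠ {(n : ℤ) + 1}) (j : Fin (2*k+1)) :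
    (eraseTop n T j).Nonempty := by
  obtain rfl | ⟨ℓ, hℓ, h, rfl | hj⟩ := eq_zero_or_exists_even j
  · exact ⟨0, mem_eraseTop.2 ⟨hT.isSignedPartition.zero_mem, mem_angleB.2 (by simp)⟩⟩
  · exact ⟨_, hT.mB_mem_eraseTop hlast hℓ h⟩
  · have hmem := mem_eraseTop.1 (hT.mB_mem_eraseTop hlast hℓ h)
    rw [← hj, hT.isSignedPartition.mem_pairIdx_iff, ← neg_mem_angleB] at hmem
    exact ⟨_, mem_eraseTop.2 hmem⟩

lemma eraseTop (hT : IsStandardB (n+1) k T) (hlast : T (Fin.last (2*k)) ≠ {(n : ℤ) + 1}) :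
    IsStandardB n k (eraseTop n T) := by
  have hne := hT.eraseTop_nonempty hlast
  refine ⟨isOrderedB_iff.2 (hT.isSignedPartition.eraseTop hne), fun ℓ hℓ h => ?_,
    fun ℓ h => ?_⟩
  · rw [mB_eraseTop (hne _)]
    exact hT.mB_mem_eraseTop hlast hℓ h
  · rw [mB_eraseTop (hne _), mB_eraseTop (hne _)]
    exact hT.2.2 ℓ h

end IsStandardB

lemma ncard_isStandardB_succ_of_last_ne (n k : ℕ) :
    {T : Fin (2*k+1) → Finset ℤ |
      IsStandardB (n+1) k T ∧ T (Fin.last (2*k)) ≠ {(n : ℤ) + 1}}.ncard =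
      (2*k+1) * {S : Fin (2*k+1) → Finset ℤ | IsStandardB n k S}.ncard := by
  set F : (Fin (2*k+1) → Finset ℤ) × Fin (2*k+1) → (Fin (2*k+1) → Finset ℤ) :=
    fun p => insertTop n p.1 p.2
  have himage : {T | IsStandardB (n+1) k T ∧ T (Fin.last (2*k)) ≠ {(n : ℤ) + 1}} =
      F '' ({S | IsStandardB n k S} ×ˢ Set.univ) := by
    ext T
    constructor
    · rintro ⟨hT, hlast⟩
      obtain ⟨i, hi⟩ := (hT.isSignedPartition.mem_angleB_iff _).1
        (mem_angleB_succ.2 (Or.inr (Or.inl rfl)))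
      exact ⟨(eraseTop n T, i), ⟨hT.eraseTop hlast, trivial⟩,
        insertTop_eraseTop hT.isSignedPartition hi⟩
    · rintro ⟨⟨S, i⟩, ⟨hS, -⟩, rfl⟩
      exact ⟨hS.insertTop i, insertTop_ne_singleton hS.isSignedPartition i _⟩
  have hinj : Set.InjOn F ({S | IsStandardB n k S} ×ˢ Set.univ) := by
    rintro ⟨S, i⟩ ⟨hS : IsStandardB n k S, -⟩ ⟨S', i'⟩ ⟨hS' : IsStandardB n k S', -⟩
      (h : insertTop n S i = insertTop n S' i')
    have hi : (n : ℤ) + 1 ∈ insertTop n S' i' i :=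
      h ▸ mem_insertTop.2 (Or.inr (Or.inl ⟨rfl, rfl⟩))
    have hi' : (n : ℤ) + 1 ∈ insertTop n S' i' i' := mem_insertTop.2 (Or.inr (Or.inl ⟨rfl, rfl⟩))
    refine Prod.ext ?_ ((hS'.isSignedPartition.insertTop i').eq_of_mem hi hi')
    rw [← eraseTop_insertTop hS.isSignedPartition i, h, eraseTop_insertTop hS'.isSignedPartition]
  rw [himage, hinj.ncard_image, Set.ncard_prod, Set.ncard_univ, Nat.card_eq_fintype_card,
    Fintype.card_fin, mul_comm]

def appendTop (n : ℕ) {k : ℕ} (U : Fin (2*k+1) → Finset ℤ) : Fin (2*(k+1)+1) → Finset ℤ :=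
  fun j => if h : j.val < 2*k+1 then U ⟨j, h⟩
    else if j.val = 2*k+1 then {-((n : ℤ) + 1)} else {(n : ℤ) + 1}

def dropTop {k : ℕ} (T : Fin (2*(k+1)+1) → Finset ℤ) : Fin (2*k+1) → Finset ℤ :=
  fun j => T (Fin.castLE (by omega) j)

section appendTop

variable {n k : ℕ} {U : Fin (2*k+1) → Finset ℤ} {T : Fin (2*(k+1)+1) → Finset ℤ}

lemma castLE_or_eq_or_eq_last (j : Fin (2*(k+1)+1)) :
    (∃ j' : Fin (2*k+1), j = Fin.castLE (by omega) j') ∨ j = ⟨2*k+1, by omega⟩ ∨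
      j = Fin.last (2*(k+1)) := by
  rcases (show j.val < 2*k+1 ∨ j.val = 2*k+1 ∨ j.val = 2*(k+1) by omega) with h | h | h
  · exact Or.inl ⟨⟨j, h⟩, rfl⟩
  · exact Or.inr (Or.inl (Fin.ext h))
  · exact Or.inr (Or.inr (Fin.ext h))

lemma castLE_ne_odd_last (j : Fin (2*k+1)) :
    Fin.castLE (by omega) j ≠ (⟨2*k+1, by omega⟩ : Fin (2*(k+1)+1)) := by
  simp [Fin.ext_iff, j.isLt.ne]

lemma castLE_ne_last (j : Fin (2*k+1)) : Fin.castLE (by omega) j ≠ Fin.last (2*(k+1)) := by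
  simp [Fin.ext_iff]
  omega

lemma appendTop_of_lt {j : Fin (2*(k+1)+1)} (h : j.val < 2*k+1) :
    appendTop n U j = U ⟨j, h⟩ :=
  dif_pos h

@[simp] lemma appendTop_castLE (j : Fin (2*k+1)) :
    appendTop n U (Fin.castLE (by omega) j) = U j :=
  appendTop_of_lt j.isLt

@[simp] lemma appendTop_odd_last : appendTop n U ⟨2*k+1, by omega⟩ = {-((n : ℤ) + 1)} := by
  simp [appendTop]

@[simp] lemma appendTop_last : appendTop n U (Fin.last (2*(k+1))) = {(n : ℤ) + 1} := by
  simp [appendTop]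
  omega

lemma dropTop_appendTop : Function.LeftInverse dropTop (appendTop n (k := k)) :=
  fun _ => funext appendTop_castLE

lemma appendTop_dropTop (hT : IsSignedPartition (n+1) (k+1) T)
    (hlast : T (Fin.last (2*(k+1))) = {(n : ℤ) + 1}) : appendTop n (dropTop T) = T := by
  have hodd : T ⟨2*k+1, by omega⟩ = {-((n : ℤ) + 1)} := by
    ext x
    rw [← pairIdx_last, hT.mem_pairIdx_iff, hlast]
    simp [neg_eq_iff_eq_neg]
  funext j
  rcases castLE_or_eq_or_eq_last j with ⟨j, rfl⟩ | rfl | rfl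
  · exact appendTop_castLE j
  · rw [appendTop_odd_last, hodd]
  · rw [appendTop_last, hlast]

lemma IsSignedPartition.of_appendTop (hT : IsSignedPartition (n+1) (k+1) (appendTop n U)) :
    IsSignedPartition n k U where
  nonempty j := appendTop_castLE (n := n) (U := U) j ▸ hT.nonempty _
  mem_angleB_iff x := by
    constructor
    · intro hx
      obtain ⟨j, hj⟩ := (hT.mem_angleB_iff x).1 (mem_angleB_succ.2 (Or.inl hx))
      rcases castLE_or_eq_or_eq_last j with ⟨j, rfl⟩ | rfl | rfl <;>
        simp only [appendTop_castLE, appendTop_odd_last, appendTop_last, Finset.mem_singleton]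
          at hj
      · exact ⟨j, hj⟩
      · exact absurd (hj ▸ hx) (neg_natCast_add_one_notMem_angleB n)
      · exact absurd (hj ▸ hx) (natCast_add_one_notMem_angleB n)
    · rintro ⟨j, hj⟩
      rw [← appendTop_castLE (n := n) (U := U) j] at hj
      rcases mem_angleB_succ.1 (hT.mem_angleB_of_mem hj) with hx | rfl | rfl
      · exact hx
      · exact absurd (hT.eq_of_mem hj (by simp)) (castLE_ne_last j)
      · exact absurd (hT.eq_of_mem hj (by simp)) (castLE_ne_odd_last j)
  eq_of_mem hi hj := Fin.castLE_injective _ <|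
    hT.eq_of_mem ((appendTop_castLE (U := U) _).symm ▸ hi)
      ((appendTop_castLE (U := U) _).symm ▸ hj)
  zero_mem := appendTop_castLE (n := n) (U := U) 0 ▸ hT.zero_mem
  mem_pairIdx_iff j x := by
    rw [← appendTop_castLE (n := n) (U := U), ← appendTop_castLE (n := n) (U := U) j,
      ← pairIdx_castLE, hT.mem_pairIdx_iff]

lemma IsSignedPartition.appendTop (hU : IsSignedPartition n k U) :
    IsSignedPartition (n+1) (k+1) (appendTop n U) where
  nonempty j := by
    rcases castLE_or_eq_or_eq_last j with ⟨j, rfl⟩ | rfl | rfl <;> simp [hU.nonempty]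
  mem_angleB_iff x := by
    rw [mem_angleB_succ, hU.mem_angleB_iff]
    constructor
    · rintro (⟨j, hj⟩ | rfl | rfl)
      · exact ⟨Fin.castLE _ j, by rwa [appendTop_castLE]⟩
      · exact ⟨Fin.last _, by simp⟩
      · exact ⟨⟨2*k+1, by omega⟩, by simp⟩
    · rintro ⟨j, hj⟩
      rcases castLE_or_eq_or_eq_last j with ⟨j, rfl⟩ | rfl | rfl <;> simp_all
      exact Or.inl ⟨j, hj⟩
  eq_of_mem {a b x} ha hb := by
    have := natCast_add_one_notMem_angleB n
    have := neg_natCast_add_one_notMem_angleB n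
    rcases castLE_or_eq_or_eq_last a with ⟨a, rfl⟩ | rfl | rfl <;>
      rcases castLE_or_eq_or_eq_last b with ⟨b, rfl⟩ | rfl | rfl <;>
      simp only [appendTop_castLE, appendTop_odd_last, appendTop_last, Finset.mem_singleton]
        at ha hb
    all_goals first
      | rw [hU.eq_of_mem ha hb] | rfl | omega
      | exact absurd (hU.mem_angleB_of_mem ha) (by simp_all)
      | exact absurd (hU.mem_angleB_of_mem hb) (by simp_all)
  zero_mem := (appendTop_castLE 0).symm ▸ hU.zero_mem
  mem_pairIdx_iff j x := by
    rcases castLE_or_eq_or_eq_last j with ⟨j, rfl⟩ | rfl | rfl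
    · rw [pairIdx_castLE, appendTop_castLE, appendTop_castLE, hU.mem_pairIdx_iff]
    · simp [pairIdx_odd_last, neg_eq_iff_eq_neg]
    · simp [pairIdx_last, neg_eq_iff_eq_neg]

lemma mB_appendTop_of_lt {j : Fin (2*(k+1)+1)} (h : j.val < 2*k+1) :
    mB (appendTop n U) j = mB U ⟨j, h⟩ := by
  rw [mB_eq_absMin, appendTop_of_lt h]
  rfl

lemma mB_appendTop_last : mB (appendTop n U) (Fin.last (2*(k+1))) = (n : ℤ) + 1 := by
  rw [mB_eq_absMin, appendTop_last, absMin_singleton, abs_of_nonneg (by positivity)]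

lemma IsStandardB.of_appendTop (hT : IsStandardB (n+1) (k+1) (appendTop n U)) :
    IsStandardB n k U := by
  refine ⟨isOrderedB_iff.2 hT.isSignedPartition.of_appendTop, fun ℓ hℓ h => ?_, fun ℓ h => ?_⟩
  · have := hT.2.1 ℓ hℓ (by omega)
    rwa [mB_appendTop_of_lt h, appendTop_of_lt h] at this
  · have := hT.2.2 ℓ (by omega)
    rwa [mB_appendTop_of_lt (show 2*ℓ < 2*k+1 by omega), mB_appendTop_of_lt h] at this

lemma IsStandardB.appendTop (hU : IsStandardB n k U) :
    IsStandardB (n+1) (k+1) (appendTop n U) := by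
  refine ⟨isOrderedB_iff.2 hU.isSignedPartition.appendTop, fun ℓ hℓ h => ?_, fun ℓ h => ?_⟩
  · rcases (show ℓ ≤ k ∨ ℓ = k+1 by omega) with hℓk | rfl
    · have h' : 2*ℓ < 2*k+1 := by omega
      rw [mB_appendTop_of_lt h', appendTop_of_lt h']
      exact hU.2.1 ℓ hℓ h'
    · change mB _ (Fin.last _) ∈ _root_.appendTop n U (Fin.last _)
      rw [mB_appendTop_last, appendTop_last]
      exact Finset.mem_singleton_self _
  · rcases (show ℓ + 1 ≤ k ∨ k = ℓ by omega) with hℓk | rfl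
    · rw [mB_appendTop_of_lt (show 2*ℓ < 2*k+1 by omega),
        mB_appendTop_of_lt (show 2*(ℓ+1) < 2*k+1 by omega)]
      exact hU.2.2 ℓ _
    · change _ < mB _ (Fin.last _)
      rw [mB_appendTop_of_lt (show 2*k < 2*k+1 by omega), mB_appendTop_last]
      exact Int.lt_add_one_iff.2 (hU.isSignedPartition.mB_le _)

end appendTop

lemma ncard_isStandardB_succ_of_last_eq (n k : ℕ) :
    {T : Fin (2*(k+1)+1) → Finset ℤ |
      IsStandardB (n+1) (k+1) T ∧ T (Fin.last (2*(k+1))) = {(n : ℤ) + 1}}.ncard =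
      {U : Fin (2*k+1) → Finset ℤ | IsStandardB n k U}.ncard := by
  have himage : {T | IsStandardB (n+1) (k+1) T ∧ T (Fin.last (2*(k+1))) = {(n : ℤ) + 1}} =
      appendTop n '' {U | IsStandardB n k U} := by
    ext T
    constructor
    · rintro ⟨hT, hlast⟩
      have hT' := appendTop_dropTop hT.isSignedPartition hlast
      rw [← hT'] at hT
      exact ⟨_, hT.of_appendTop, hT'⟩
    · rintro ⟨U, hU, rfl⟩
      exact ⟨hU.appendTop, appendTop_last⟩
  rw [himage, Set.ncard_image_of_injective _ dropTop_appendTop.injective]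

lemma finite_setOf_isStandardB (n k : ℕ) :
    {S : Fin (2*k+1) → Finset ℤ | IsStandardB n k S}.Finite :=
  (Set.Finite.pi fun _ => (angleB n).powerset.finite_toSet).subset fun _ hS =>
    Set.mem_univ_pi.2 fun _ => Finset.mem_powerset.2 fun _ hx =>
      hS.isSignedPartition.mem_angleB_of_mem hx

lemma ncard_isStandardB_succ_succ (n k : ℕ) :
    {T : Fin (2*(k+1)+1) → Finset ℤ | IsStandardB (n+1) (k+1) T}.ncard =
      {U : Fin (2*k+1) → Finset ℤ | IsStandardB n k U}.ncard +
        (2*(k+1)+1) * {S : Fin (2*(k+1)+1) → Finset ℤ | IsStandardB n (k+1) S}.ncard := by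
  rw [← Set.ncard_inter_add_ncard_sdiff_eq_ncard _ {T | T (Fin.last _) = {(n : ℤ) + 1}}
    (finite_setOf_isStandardB _ _), ← ncard_isStandardB_succ_of_last_eq,
    ← ncard_isStandardB_succ_of_last_ne]
  rfl

lemma isStandardB_zero_iff {n : ℕ} {S : Fin (2*0+1) → Finset ℤ} :
    IsStandardB n 0 S ↔ S = fun _ => angleB n := by
  have hfin (j : Fin (2*0+1)) : j = 0 := Fin.ext (by omega)
  constructor
  · intro hS
    ext j x
    rw [hS.isSignedPartition.mem_angleB_iff]
    exact ⟨fun hx => ⟨j, hx⟩, fun ⟨i, hi⟩ => by rwa [hfin i, ← hfin j] at hi⟩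
  · rintro rfl
    refine ⟨isOrderedB_iff.2 ⟨fun _ => ⟨0, mem_angleB.2 (by simp)⟩, fun x => ?_,
      fun _ _ => (hfin _).trans (hfin _).symm, mem_angleB.2 (by simp),
      fun _ _ => neg_mem_angleB.symm⟩, fun ℓ hℓ h => absurd h (by omega),
      fun ℓ h => absurd h (by omega)⟩
    simp

lemma setOf_isStandardB_zero_succ (k : ℕ) :
    {S : Fin (2*(k+1)+1) → Finset ℤ | IsStandardB 0 (k+1) S} = ∅ :=
  Set.eq_empty_of_forall_notMem fun _ hS =>
    k.succ_ne_zero (IsStandardB.isSignedPartition hS).eq_zero_of_angleB_zero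

lemma StirB_zero_right (n : ℕ) : StirB n 0 = 1 := by
  induction n with
  | zero => rfl
  | succ n ih => exact ih

/-- S_B(n,k) counts standard type B partitions of ⟨n⟩ with 2k+1 blocks. -/
theorem stmt0 (n k : ℕ) :
    {S : Fin (2*k+1) → Finset ℤ | IsStandardB n k S}.ncard = StirB n k := by
  induction n generalizing k with
  | zero =>
    cases k with
    | zero => simp [isStandardB_zero_iff, StirB_zero_right]
    | succ k =>
      rw [setOf_isStandardB_zero_succ, Set.ncard_empty]
      rfl
  | succ n ih =>
    cases k with
    | zero => simp [isStandardB_zero_iff, StirB_zero_right]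
    | succ k => rw [ncard_isStandardB_succ_succ, ih, ih]; rfl
end

section
/- For every standard type B partition π of ⟨n⟩ with 2k+1 blocks, lob_{B'}(π) = k. -/
open Finset Polynomial

/-! The blocks come in pairs `S_{2ℓ-1}, S_{2ℓ} = -S_{2ℓ-1}` with a common minimum `m_{2ℓ}`,
and these minima strictly increase with `ℓ`. If `s ∈ S_i`, `i > j` and `0 < s ≤ m_j`, then
`m_i ≤ s ≤ m_j`, which forces `S_j, S_i` to be the two blocks of one pair, `j = 2ℓ-1`, `i = 2ℓ`
and `s = m_{2ℓ}`. Conversely each such pair contributes `(m_{2ℓ}, S_{2ℓ-1})`, since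
`m_{2ℓ} ∈ S_{2ℓ}`. So there is exactly one counted pair for each `ℓ = 1, …, k`. -/

lemma mB_nonneg {m : ℕ} (S : Fin m → Finset ℤ) (j : Fin m) : 0 ≤ mB S j := by
  unfold mB
  cases h : ((S j).image (fun x => |x|)).min with
  | top => simp
  | coe a =>
    obtain ⟨x, -, rfl⟩ := Finset.mem_image.mp (Finset.mem_of_min h)
    exact abs_nonneg x

lemma mB_le_abs {m : ℕ} {S : Fin m → Finset ℤ} {j : Fin m} {s : ℤ} (hs : s ∈ S j) :
    mB S j ≤ |s| := by
  have hmin := Finset.min_le (Finset.mem_image_of_mem (fun x => |x|) hs)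
  unfold mB
  cases h : ((S j).image (fun x => |x|)).min with
  | top => simp [h] at hmin
  | coe a => rw [h] at hmin; exact WithTop.coe_le_coe.mp hmin

lemma mB_eq_of_eq_image_neg {m : ℕ} {S : Fin m → Finset ℤ} {i j : Fin m}
    (h : S i = (S j).image (fun x => -x)) : mB S i = mB S j := by
  unfold mB
  rw [h, Finset.image_image]
  congr 3
  funext x
  exact abs_neg x

/-- Block `j` belongs to the `⌈j/2⌉`-th pair `{S_{2ℓ-1}, S_{2ℓ}}`; `S_0` is pair `0` on its own. -/
def blockPair {k : ℕ} (j : Fin (2*k+1)) : Fin (k+1) := ⟨(j.val + 1) / 2, by omega⟩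

def pairMin {k : ℕ} (S : Fin (2*k+1) → Finset ℤ) (ℓ : Fin (k+1)) : ℤ :=
  mB S ⟨2 * ℓ.val, by omega⟩

lemma blockPair_mono {k : ℕ} : Monotone (blockPair (k := k)) := fun _ _ h =>
  Fin.mk_le_mk.mpr (Nat.div_le_div_right (Nat.succ_le_succ (Fin.le_def.mp h)))

namespace IsStandardB

variable {n k : ℕ} {S : Fin (2*k+1) → Finset ℤ}

lemma mB_eq_pairMin (hS : IsStandardB n k S) (j : Fin (2*k+1)) :
    mB S j = pairMin S (blockPair j) := by
  obtain ⟨t, ht | ht⟩ := Nat.even_or_odd' j.val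
  · exact congrArg (mB S) (Fin.ext (by simp only [blockPair]; omega))
  · obtain ⟨⟨-, -, -, -, -, hneg⟩, -⟩ := hS
    have hpair := hneg (t + 1) (by omega) (by omega)
    calc mB S j = mB S ⟨2 * (t + 1) - 1, by omega⟩ :=
          congrArg (mB S) (Fin.ext (by simp only; omega))
      _ = mB S ⟨2 * (t + 1), by omega⟩ := (mB_eq_of_eq_image_neg hpair).symm
      _ = pairMin S (blockPair j) :=
          congrArg (mB S) (Fin.ext (by simp only [blockPair]; omega))

lemma strictMono_pairMin (hS : IsStandardB n k S) : StrictMono (pairMin S) :=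
  Fin.strictMono_iff_lt_succ.mpr fun ℓ => by
    simpa only [pairMin, Fin.val_castSucc, Fin.val_succ] using hS.2.2 ℓ.val (by omega)

lemma pairMin_pos (hS : IsStandardB n k S) {ℓ : Fin (k+1)} (hℓ : ℓ ≠ 0) : 0 < pairMin S ℓ :=
  (mB_nonneg S _).trans_lt (hS.strictMono_pairMin (Fin.pos_iff_ne_zero.mpr hℓ))

lemma pairMin_succ_mem (hS : IsStandardB n k S) (ℓ : Fin k) :
    pairMin S ℓ.succ ∈ S ⟨2 * ℓ.val + 2, by omega⟩ :=
  hS.2.1 (ℓ.val + 1) (by omega) (by omega)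

lemma lobB'_set_eq (hS : IsStandardB n k S) :
    {p : ℤ × Fin (2*k+1) | (∃ i, p.2 < i ∧ p.1 ∈ S i) ∧ 0 < p.1 ∧ p.1 ≤ mB S p.2} =
      Set.range fun ℓ : Fin k => (pairMin S ℓ.succ, ⟨2 * ℓ.val + 1, by omega⟩) := by
  ext ⟨s, j⟩
  simp only [Set.mem_ofPred_eq, Set.mem_range, Prod.mk.injEq]
  constructor
  · rintro ⟨⟨i, hji, hsi⟩, hs, hsj⟩
    have hmi : mB S i ≤ s := abs_of_pos hs ▸ mB_le_abs hsi
    have hmin : pairMin S (blockPair i) ≤ pairMin S (blockPair j) := by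
      rw [← hS.mB_eq_pairMin, ← hS.mB_eq_pairMin]; omega
    have hsame : blockPair i = blockPair j :=
      le_antisymm (hS.strictMono_pairMin.le_iff_le.mp hmin) (blockPair_mono hji.le)
    have hval := congrArg Fin.val hsame
    simp only [blockPair] at hval
    have hj : j.val % 2 = 1 := by rw [Fin.lt_def] at hji; omega
    refine ⟨⟨j.val / 2, by omega⟩, ?_, Fin.ext (by simp only; omega)⟩
    have hsucc : (⟨j.val / 2, by omega⟩ : Fin k).succ = blockPair j :=
      Fin.ext (by simp only [blockPair, Fin.val_succ]; omega)
    rw [hsucc, ← hS.mB_eq_pairMin]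
    rw [hS.mB_eq_pairMin, hsame, ← hS.mB_eq_pairMin] at hmi
    omega
  · rintro ⟨ℓ, rfl, rfl⟩
    have hsucc : ℓ.succ = blockPair ⟨2 * ℓ.val + 1, by omega⟩ :=
      Fin.ext (by simp only [blockPair, Fin.val_succ]; omega)
    refine ⟨⟨_, Fin.mk_lt_mk.mpr (Nat.lt_succ_self _), hS.pairMin_succ_mem ℓ⟩,
      hS.pairMin_pos (Fin.succ_ne_zero ℓ), ?_⟩
    rw [hsucc, ← hS.mB_eq_pairMin]

end IsStandardB

/-- lob_{B'}(π) = k for every standard type B partition π. -/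
theorem stmt6 (n k : ℕ) (S : Fin (2*k+1) → Finset ℤ) (hS : IsStandardB n k S) :
    lobB' S = k := by
  rw [lobB', hS.lobB'_set_eq, Set.ncard_range_of_injective, Nat.card_eq_fintype_card,
    Fintype.card_fin]
  intro a b hab
  exact Fin.ext (by simpa using congrArg (fun p => p.2.val) hab)
end

section
/- The statistics ros_B and rcb_B are equidistributed over ordered type B partitions of ⟨n⟩ with 2k+1 blocks: the complement map π ↦ π^c (replacing each positive i by n+1-i, each -i by -(n+1-i), and fixing 0) is a bijection on ordered type B partitions satisfying rcb_B(π^c) = ros_B(π). -/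
open Finset Polynomial

/-!
The complement `complB n` is an involution of `⟨n⟩` commuting with negation, so it maps ordered
type B partitions to ordered type B partitions and is its own inverse. It fixes the sign of each
entry and turns `|x|` into `n + 1 - |x|` for `x ≠ 0`, so on a block not containing `0` it turns the
minimum `m_j` of absolute values into the maximum `M_j = n + 1 - m_j` of the complemented block.
Hence, for `s` in an earlier block, `s ≥ m_j` holds exactly when `0 < complB n s ≤ M_j(π^c)`, and
`(s, j) ↦ (complB n s, j)` maps the pairs counted by `ros_B(π)` bijectively onto those counted by
`rcb_B(π^c)`.
-/

section Complement

variable {n : ℕ} {x : ℤ}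

lemma complB_mem_angleB (hx : x ∈ angleB n) : complB n x ∈ angleB n := by
  simp only [angleB, mem_Icc] at *
  simp only [complB]; split_ifs <;> omega

lemma complB_complB (hx : x ∈ angleB n) : complB n (complB n x) = x := by
  simp only [angleB, mem_Icc] at hx
  simp only [complB]; split_ifs <;> omega

lemma complB_neg (n : ℕ) (x : ℤ) : complB n (-x) = -complB n x := by
  simp only [complB]; split_ifs <;> omega

lemma complB_of_pos (hx : 0 < x) : complB n x = n + 1 - x := if_pos hx

lemma complB_pos_iff (hx : x ∈ angleB n) : 0 < complB n x ↔ 0 < x := by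
  simp only [angleB, mem_Icc] at hx
  simp only [complB]; split_ifs <;> omega

lemma abs_complB (hx : x ∈ angleB n) (hx0 : x ≠ 0) : |complB n x| = n + 1 - |x| := by
  simp only [angleB, mem_Icc] at hx
  simp only [complB, Int.abs_eq_natAbs]; split_ifs <;> omega

lemma image_complB_angleB (n : ℕ) : (angleB n).image (complB n) = angleB n := by
  refine Subset.antisymm (fun y hy => ?_) (fun y hy => ?_)
  · obtain ⟨x, hx, rfl⟩ := mem_image.1 hy
    exact complB_mem_angleB hx
  · exact mem_image.2 ⟨complB n y, complB_mem_angleB hy, complB_complB hy⟩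

lemma image_complB_image_complB {s : Finset ℤ} (hs : s ⊆ angleB n) :
    (s.image (complB n)).image (complB n) = s := by
  rw [image_image]
  calc s.image (complB n ∘ complB n) = s.image id := image_congr fun x hx => complB_complB (hs hx)
    _ = s := image_id

end Complement

section BlockExtrema

variable {n m : ℕ} {S : Fin m → Finset ℤ} {j : Fin m}

lemma mB_eq_min' (h : (S j).Nonempty) : mB S j = ((S j).image (|·|)).min' (h.image _) := by
  rw [mB, ← coe_min' (h.image _)]
  rfl

lemma mB_le_abs_s9 {x : ℤ} (hx : x ∈ S j) : mB S j ≤ |x| := by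
  rw [mB_eq_min' ⟨x, hx⟩]
  exact min'_le _ _ (mem_image_of_mem _ hx)

lemma exists_abs_eq_mB (h : (S j).Nonempty) : ∃ x ∈ S j, |x| = mB S j := by
  rw [mB_eq_min' h]
  exact mem_image.1 (min'_mem _ _)

lemma MB_eq_of_isGreatest {b : ℤ} (h : IsGreatest ((S j).image (|·|) : Set ℤ) b) : MB S j = b := by
  have hmax : ((S j).image (|·|)).max = b :=
    le_antisymm (Finset.max_le fun y hy => WithBot.coe_le_coe.2 (h.2 hy)) (le_max h.1)
  rw [MB, hmax]
  rfl

lemma one_le_mB (h : (S j).Nonempty) (h0 : (0 : ℤ) ∉ S j) : 1 ≤ mB S j := by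
  obtain ⟨x, hx, hxm⟩ := exists_abs_eq_mB h
  have : x ≠ 0 := fun hx0 => h0 (hx0 ▸ hx)
  rw [← hxm]
  exact Int.one_le_abs this

lemma MB_complP (hne : (S j).Nonempty) (hsub : S j ⊆ angleB n) (h0 : (0 : ℤ) ∉ S j) :
    MB (complP n S) j = n + 1 - mB S j := by
  obtain ⟨x₀, hx₀, hx₀m⟩ := exists_abs_eq_mB hne
  have hne0 : ∀ x ∈ S j, x ≠ 0 := fun x hx hx0 => h0 (hx0 ▸ hx)
  apply MB_eq_of_isGreatest
  constructor
  · refine mem_image.2 ⟨complB n x₀, mem_image_of_mem _ hx₀, ?_⟩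
    rw [abs_complB (hsub hx₀) (hne0 x₀ hx₀), hx₀m]
  · intro y hy
    obtain ⟨_, hz, rfl⟩ := mem_image.1 (mem_coe.1 hy)
    obtain ⟨x, hx, rfl⟩ := mem_image.1 hz
    rw [abs_complB (hsub hx) (hne0 x hx)]
    linarith [mB_le_abs_s9 hx]

end BlockExtrema

section Statistic

variable {n m : ℕ} {S : Fin m → Finset ℤ}

lemma complB_mem_rcb_iff (hsub : ∀ i, S i ⊆ angleB n) {j : Fin m} (hne : (S j).Nonempty)
    (h0 : (0 : ℤ) ∉ S j) {s : ℤ} (hs : s ∈ angleB n) :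
    (0 < complB n s ∧ complB n s ≤ MB (complP n S) j) ↔ mB S j ≤ s := by
  rw [complB_pos_iff hs, MB_complP hne (hsub j) h0]
  have h1 := one_le_mB hne h0
  constructor
  · rintro ⟨hpos, hle⟩
    rw [complB_of_pos hpos] at hle
    omega
  · intro hle
    have hpos : 0 < s := by omega
    rw [complB_of_pos hpos]
    omega

theorem rcbB_complP (hsub : ∀ i, S i ⊆ angleB n) (hne : ∀ j, (S j).Nonempty)
    (hzero : ∀ j : Fin m, 0 < (j : ℕ) → (0 : ℤ) ∉ S j) :
    rcbB (complP n S) = rosB S := by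
  have hzero' : ∀ {i j : Fin m}, i < j → (0 : ℤ) ∉ S j := fun hij =>
    hzero _ (Nat.zero_lt_of_lt (Fin.lt_def.1 hij))
  have himage : {p : ℤ × Fin m |
        (∃ i < p.2, p.1 ∈ complP n S i) ∧ 0 < p.1 ∧ p.1 ≤ MB (complP n S) p.2}
      = Prod.map (complB n) id '' {p | (∃ i < p.2, p.1 ∈ S i) ∧ mB S p.2 ≤ p.1} := by
    ext ⟨t, j⟩
    simp only [Set.mem_ofPred_eq, Set.mem_image, Prod.exists, Prod.map, id, Prod.mk.injEq]
    constructor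
    · rintro ⟨⟨i, hij, ht⟩, hrcb⟩
      obtain ⟨s, hs, rfl⟩ := mem_image.1 ht
      exact ⟨s, j, ⟨⟨i, hij, hs⟩,
        (complB_mem_rcb_iff hsub (hne j) (hzero' hij) (hsub i hs)).1 hrcb⟩, rfl, rfl⟩
    · rintro ⟨s, _, ⟨⟨i, hij, hs⟩, hros⟩, rfl, rfl⟩
      exact ⟨⟨i, hij, mem_image_of_mem _ hs⟩,
        (complB_mem_rcb_iff hsub (hne _) (hzero' hij) (hsub i hs)).2 hros⟩
  rw [rcbB, rosB, invB, himage]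
  refine Set.InjOn.ncard_image ?_
  rintro ⟨s, j⟩ ⟨⟨i, -, hs : s ∈ S i⟩, -⟩ ⟨s', j'⟩ ⟨⟨i', -, hs' : s' ∈ S i'⟩, -⟩ heq
  simp only [Prod.map, id, Prod.mk.injEq] at heq
  obtain ⟨hss', rfl⟩ := heq
  rw [← complB_complB (hsub i hs), hss', complB_complB (hsub i' hs')]

end Statistic

namespace IsOrderedB

variable {n k : ℕ} {S : Fin (2*k+1) → Finset ℤ}

lemma subset_angleB (hS : IsOrderedB n k S) (i : Fin (2*k+1)) : S i ⊆ angleB n := by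
  rw [← hS.2.2.1]
  exact subset_biUnion_of_mem S (mem_univ i)

lemma zero_notMem (hS : IsOrderedB n k S) {j : Fin (2*k+1)} (hj : 0 < (j : ℕ)) :
    (0 : ℤ) ∉ S j :=
  disjoint_left.1 (hS.2.1 0 j (Fin.ne_of_lt (Fin.lt_def.2 hj))) hS.2.2.2.1

lemma complP (hS : IsOrderedB n k S) : IsOrderedB n k (complP n S) := by
  obtain ⟨hne, hdisj, hcov, h0, hneg, hpair⟩ := hS
  have hsub := subset_angleB ⟨hne, hdisj, hcov, h0, hneg, hpair⟩
  refine ⟨fun i => (hne i).image _, ?_, ?_, ?_, ?_, ?_⟩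
  · intro i j hij
    rw [disjoint_left]
    intro a hai haj
    obtain ⟨x, hx, rfl⟩ := mem_image.1 hai
    obtain ⟨y, hy, hxy⟩ := mem_image.1 haj
    rw [← complB_complB (hsub j hy), hxy, complB_complB (hsub i hx)] at hy
    exact disjoint_left.1 (hdisj i j hij) hx hy
  · rw [show _root_.complP n S = fun i => (S i).image (complB n) from rfl, ← biUnion_image, hcov, image_complB_angleB]
  · exact mem_image.2 ⟨0, h0, rfl⟩
  · intro a ha
    obtain ⟨y, hy, rfl⟩ := mem_image.1 ha
    exact mem_image.2 ⟨-y, hneg y hy, complB_neg n y⟩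
  · intro i hi h
    simp only [_root_.complP, hpair i hi h, image_image]
    congr 1
    funext x
    exact complB_neg n x

end IsOrderedB

lemma complP_complP {n m : ℕ} {S : Fin m → Finset ℤ} (hsub : ∀ i, S i ⊆ angleB n) :
    complP n (complP n S) = S :=
  funext fun j => image_complB_image_complB (hsub j)

/-- the complement map is a bijection on ordered type B partitions
with rcb_B(π^c) = ros_B(π). -/
theorem stmt9 (n k : ℕ) (S : Fin (2*k+1) → Finset ℤ) (hS : IsOrderedB n k S) :
    IsOrderedB n k (complP n S) ∧ complP n (complP n S) = S ∧
      rcbB (complP n S) = rosB S :=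
  ⟨hS.complP, complP_complP hS.subset_angleB,
    rcbB_complP hS.subset_angleB hS.1 fun _ hj => hS.zero_notMem hj⟩
end
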